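/- arXiv:2501.00144 — 2 statements merged into one kernel-verified Lean document; each statement's English description precedes it below -/
import Mathlib

section
/- For any finite connected vertex-transitive graph G with at least two vertices, the diameter D satisfies D < 2μ, where μ is the mean distance between distinct vertices. -/
open Finset

private lemma iso_dist_le {V : Type*} (G : SimpleGraph V) (hconn : G.Connected)
    (φ : G ≃g G) (u v : V) : G.dist (φ u) (φ v) ≤ G.dist u v := by
  obtain ⟨p, hp⟩ := hconn.exists_walk_length_eq_dist u v
  calc G.dist (φ u) (φ v) ≤ (p.map φ.toHom).length := SimpleGraph.dist_le _
    _ = p.length := p.length_map _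
    _ = G.dist u v := hp

private lemma iso_dist_eq {V : Type*} (G : SimpleGraph V) (hconn : G.Connected)
    (φ : G ≃g G) (u v : V) : G.dist (φ u) (φ v) = G.dist u v := by
  refine le_antisymm (iso_dist_le G hconn φ u v) ?_
  have := iso_dist_le G hconn φ.symm (φ u) (φ v)
  simpa using this

/-- For a finite connected vertex-transitive graph on at least 2 vertices, the diameter `D`
is strictly less than twice the mean distance `μ` over unordered pairs of distinct vertices. -/
theorem diam_lt_two_mul_mean_dist {V : Type*} [Fintype V]
    (G : SimpleGraph V) (hconn : G.Connected)
    (htrans : ∀ u v : V, ∃ φ : G ≃g G, φ u = v)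
    (hn : 2 ≤ Fintype.card V)
    (D : ℕ) (hDub : ∀ u v : V, G.dist u v ≤ D) (hDach : ∃ u v : V, G.dist u v = D) :
    (D : ℝ) < 2 * (((∑ u, ∑ v, (G.dist u v : ℝ)) / 2) / ((Fintype.card V).choose 2 : ℝ)) := by
  classical
  set n := Fintype.card V with hn_def
  obtain ⟨x, y, hxy⟩ := hDach
  -- D ≥ 1
  obtain ⟨a, b, hab⟩ := Fintype.exists_pair_of_one_lt_card (α := V) (by omega)
  have hD1 : 1 ≤ D := le_trans (hconn.pos_dist_of_ne hab) (hDub a b)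
  -- sum of distances from a vertex is constant
  have hS : ∀ c d : V, ∑ v, G.dist c v = ∑ v, G.dist d v := by
    intro c d
    obtain ⟨φ, hφ⟩ := htrans c d
    calc ∑ v, G.dist c v = ∑ v, G.dist (φ c) (φ v) := by
          exact Finset.sum_congr rfl fun v _ => (iso_dist_eq G hconn φ c v).symm
      _ = ∑ v, G.dist d (φ v) := by rw [hφ]
      _ = ∑ v, G.dist d v := Equiv.sum_comp φ.toEquiv (fun w => G.dist d w)
  set S := ∑ v, G.dist x v with hS_def
  -- n * D ≤ 2 * S
  have hkey : n * D ≤ 2 * S := by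
    have h1 : ∀ w : V, D ≤ G.dist x w + G.dist w y := by
      intro w
      rw [← hxy]
      exact hconn.dist_triangle
    calc n * D = ∑ _w : V, D := by rw [Finset.sum_const, card_univ, smul_eq_mul]
      _ ≤ ∑ w : V, (G.dist x w + G.dist w y) := Finset.sum_le_sum fun w _ => h1 w
      _ = (∑ w : V, G.dist x w) + ∑ w : V, G.dist w y := Finset.sum_add_distrib
      _ = S + ∑ w : V, G.dist y w := by
          rw [hS_def]; congr 1; exact Finset.sum_congr rfl fun w _ => SimpleGraph.dist_comm
      _ = S + S := by rw [← hS x y]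
      _ = 2 * S := by ring
  -- total sum
  have hT : ∑ u, ∑ v, G.dist u v = n * S := by
    rw [Finset.sum_congr rfl fun u _ => hS u x, Finset.sum_const, card_univ, smul_eq_mul]
  -- choose
  have hchoose : 2 * n.choose 2 = n * (n - 1) := by
    rw [Nat.choose_two_right]
    refine Nat.mul_div_cancel' ?_
    have h := (Nat.even_mul_succ_self (n - 1)).two_dvd
    have h2 : (n - 1) * (n - 1 + 1) = n * (n - 1) := by
      rw [Nat.sub_add_cancel (by omega)]; ring
    rwa [h2] at h
  -- the key nat inequality: D * n.choose 2 < ∑ u, ∑ v, dist u v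
  have hnat : D * n.choose 2 < ∑ u, ∑ v, G.dist u v := by
    have : 2 * (D * n.choose 2) < 2 * (n * S) := by
      calc 2 * (D * n.choose 2) = D * (2 * n.choose 2) := by ring
        _ = D * (n * (n - 1)) := by rw [hchoose]
        _ < D * (n * n) := by
            refine mul_lt_mul_of_pos_left ?_ (by omega)
            exact mul_lt_mul_of_pos_left (by omega) (by omega)
        _ = n * (n * D) := by ring
        _ ≤ n * (2 * S) := Nat.mul_le_mul_left n hkey
        _ = 2 * (n * S) := by ring
    rw [hT]; omega
  -- pass to ℝ
  have hcpos : (0 : ℝ) < (n.choose 2 : ℝ) := by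
    have : 1 ≤ n.choose 2 := Nat.one_le_iff_ne_zero.mpr (by
      intro h
      have := Nat.choose_eq_zero_iff.mp h
      omega)
    exact_mod_cast Nat.lt_of_lt_of_le Nat.zero_lt_one this
  have hsum : (∑ u, ∑ v, (G.dist u v : ℝ)) = ((∑ u, ∑ v, G.dist u v : ℕ) : ℝ) := by
    push_cast; rfl
  have hc0 : (n.choose 2 : ℝ) ≠ 0 := ne_of_gt hcpos
  have h2 : 2 * ((((∑ u, ∑ v, G.dist u v : ℕ) : ℝ)) / 2 / (n.choose 2 : ℝ))
      = ((∑ u, ∑ v, G.dist u v : ℕ) : ℝ) / (n.choose 2 : ℝ) := by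
    field_simp
  rw [hsum, h2, lt_div_iff₀ hcpos]
  exact_mod_cast hnat
end

section
/- The diameter of the cycle graph C_{2n} is n, and for C_{2n} the ratio D/μ equals (2n−1)/n, which tends to 2 as n → ∞; in particular D ≥ 2μ − 1 for all n, showing the bound D < 2μ is asymptotically tight. -/
open SimpleGraph
open Fin.CommRing

lemma fin_min_succ (m : ℕ) [NeZero m] (hm : 2 ≤ m) (x : Fin m) :
    min ((x + 1 : Fin m)).val ((-(x + 1) : Fin m)).val ≤ min x.val ((-x : Fin m)).val + 1 := by
  haveI : NeZero m := ⟨by omega⟩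
  have hx := x.isLt
  have h1 : ((1 : Fin m)).val = 1 := by
    simp [Fin.val_one', Nat.mod_eq_of_lt hm]
  have hadd : ((x + 1 : Fin m)).val = (x.val + 1) % m := by
    rw [Fin.add_def, h1]
  have hneg : ∀ y : Fin m, ((-y : Fin m)).val = (m - y.val) % m := fun y => by
    rw [Fin.neg_def]
  rw [hneg, hneg, hadd]
  rcases Nat.lt_or_ge (x.val + 1) m with h | h
  · rw [Nat.mod_eq_of_lt h]
    rcases Nat.eq_zero_or_pos x.val with h0 | h0
    · rw [h0]
      have : (m - (0 + 1)) % m = m - 1 := Nat.mod_eq_of_lt (by omega)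
      rw [this]
      have : (m - 0) % m = 0 := by simp
      rw [this]; omega
    · have e1 : (m - (x.val + 1)) % m = m - (x.val + 1) := Nat.mod_eq_of_lt (by omega)
      have e2 : (m - x.val) % m = m - x.val := Nat.mod_eq_of_lt (by omega)
      rw [e1, e2]; omega
  · have hxm : x.val + 1 = m := by omega
    rw [hxm, Nat.mod_self]
    simp

lemma walk_lower {m : ℕ} (hm : 2 ≤ m) {u v : Fin m}
    (p : (SimpleGraph.cycleGraph m).Walk u v) :
    min ((v - u : Fin m)).val ((u - v : Fin m)).val ≤ p.length := by
  haveI : NeZero m := ⟨by omega⟩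
  induction p with
  | nil => simp
  | @cons u w v h q ih =>
    rw [SimpleGraph.cycleGraph_adj'] at h
    have h1 : ((1 : Fin m)).val = 1 := by simp [Fin.val_one', Nat.mod_eq_of_lt hm]
    rw [SimpleGraph.Walk.length_cons]
    rcases h with h | h
    · -- (u - w).val = 1, so u - w = 1
      have huw : (u - w : Fin m) = 1 := by
        apply Fin.ext; rw [h1]; exact h
      have e1 : (v - u : Fin m) = -(-(v - w) + 1) := by
        rw [← huw]; ring
      have e2 : (u - v : Fin m) = (-(v - w) + 1) := by
        rw [← huw]; ring
      rw [e1, e2]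
      have := fin_min_succ m hm (-(v - w))
      simp only [neg_neg] at this
      calc min ((-(-(v - w) + 1) : Fin m)).val (((-(v - w) + 1) : Fin m)).val
          = min (((-(v - w) + 1) : Fin m)).val ((-(-(v - w) + 1) : Fin m)).val := min_comm _ _
        _ ≤ min ((-(v - w) : Fin m)).val ((v - w : Fin m)).val + 1 := this
        _ = min ((v - w : Fin m)).val ((-(v - w) : Fin m)).val + 1 := by rw [min_comm]
        _ = min ((v - w : Fin m)).val ((w - v : Fin m)).val + 1 := by rw [neg_sub]
        _ ≤ q.length + 1 := by omega
    · -- (w - u).val = 1, so w - u = 1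
      have hwu : (w - u : Fin m) = 1 := by
        apply Fin.ext; rw [h1]; exact h
      have e1 : (v - u : Fin m) = ((v - w) + 1) := by rw [← hwu]; ring
      have e2 : (u - v : Fin m) = -((v - w) + 1) := by rw [← hwu]; ring
      rw [e1, e2]
      have := fin_min_succ m hm (v - w)
      calc min (((v - w) + 1 : Fin m)).val ((-((v - w) + 1) : Fin m)).val
          ≤ min ((v - w : Fin m)).val ((-(v - w) : Fin m)).val + 1 := this
        _ = min ((v - w : Fin m)).val ((w - v : Fin m)).val + 1 := by rw [neg_sub]
        _ ≤ q.length + 1 := by omega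

lemma exists_walk_add {m : ℕ} [NeZero m] (hm : 2 ≤ m) (u : Fin m) (k : ℕ) :
    ∃ p : (SimpleGraph.cycleGraph m).Walk u (u + (k : Fin m)), p.length = k := by
  haveI : NeZero m := ⟨by omega⟩
  induction k with
  | zero => exact ⟨(SimpleGraph.Walk.nil).copy rfl (by simp), by simp⟩
  | succ k ih =>
    obtain ⟨p, hp⟩ := ih
    have h1 : ((1 : Fin m)).val = 1 := by simp [Fin.val_one', Nat.mod_eq_of_lt hm]
    have hadj : (SimpleGraph.cycleGraph m).Adj (u + (k : Fin m)) (u + (k : Fin m) + 1) := by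
      rw [SimpleGraph.cycleGraph_adj']
      right
      have : ((u + (k : Fin m) + 1) - (u + (k : Fin m)) : Fin m) = 1 := by ring
      rw [this, h1]
    refine ⟨(p.concat hadj).copy rfl (by push_cast; ring), by simp [hp]⟩

lemma dist_le_sub {m : ℕ} (hm : 2 ≤ m) (u v : Fin m) :
    (SimpleGraph.cycleGraph m).dist u v ≤ ((v - u : Fin m)).val := by
  haveI : NeZero m := ⟨by omega⟩
  obtain ⟨p, hp⟩ := exists_walk_add hm u ((v - u : Fin m)).val
  have hc : u + ((((v - u : Fin m)).val : ℕ) : Fin m) = v := by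
    rw [Fin.cast_val_eq_self]; ring
  calc (SimpleGraph.cycleGraph m).dist u v ≤ (p.copy rfl hc).length := SimpleGraph.dist_le _
    _ = ((v - u : Fin m)).val := by rw [SimpleGraph.Walk.length_copy, hp]

theorem cycle_diam_and_ratio (n : ℕ) (hn : 1 ≤ n) :
    (∀ u v : Fin (2 * n), (SimpleGraph.cycleGraph (2 * n)).dist u v ≤ n) ∧
      (∃ u v : Fin (2 * n), (SimpleGraph.cycleGraph (2 * n)).dist u v = n) ∧
      (n : ℝ) / ((n : ℝ) ^ 2 / (2 * (n : ℝ) - 1)) = (2 * (n : ℝ) - 1) / (n : ℝ) ∧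
      (n : ℝ) ≥ 2 * ((n : ℝ) ^ 2 / (2 * (n : ℝ) - 1)) - 1 ∧
      Filter.Tendsto (fun n : ℕ => (2 * (n : ℝ) - 1) / (n : ℝ)) Filter.atTop
        (nhds 2) := by
  have hm : 2 ≤ 2 * n := by omega
  haveI : NeZero (2 * n) := ⟨by omega⟩
  refine ⟨?_, ?_, ?_, ?_, ?_⟩
  · -- upper bound
    intro u v
    by_cases huv : u = v
    · subst huv
      rw [SimpleGraph.dist_self]
      omega
    · have h1 := dist_le_sub hm u v
      have h2 := dist_le_sub hm v u
      rw [SimpleGraph.dist_comm] at h2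
      have hsum : ((v - u : Fin (2 * n))).val + ((u - v : Fin (2 * n))).val = 2 * n := by
        have hne : (v - u : Fin (2 * n)) ≠ 0 := by
          intro h; exact huv (sub_eq_zero.mp h).symm
        have hval : ((u - v : Fin (2 * n))) = -(v - u : Fin (2 * n)) := by ring
        rw [hval]
        have : ((-(v - u) : Fin (2 * n))).val = 2 * n - ((v - u : Fin (2 * n))).val := by
          rw [Fin.neg_def]
          simp only []
          exact Nat.mod_eq_of_lt (by
            have := (v - u : Fin (2 * n)).isLt
            have hpos : 0 < ((v - u : Fin (2 * n))).val := by
              rcases Nat.eq_zero_or_pos ((v - u : Fin (2 * n))).val with h0 | h0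
              · exact absurd (Fin.ext h0 : (v - u : Fin (2 * n)) = 0) hne
              · exact h0
            omega)
        rw [this]
        have hpos : 0 < ((v - u : Fin (2 * n))).val := by
          rcases Nat.eq_zero_or_pos ((v - u : Fin (2 * n))).val with h0 | h0
          · exact absurd (Fin.ext h0 : (v - u : Fin (2 * n)) = 0) hne
          · exact h0
        have := (v - u : Fin (2 * n)).isLt
        omega
      omega
  · -- existence: dist 0 ⟨n⟩ = n
    refine ⟨0, ⟨n, by omega⟩, ?_⟩
    set v : Fin (2 * n) := ⟨n, by omega⟩
    have hv : (v - 0 : Fin (2 * n)) = v := by ring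
    have hvval : ((v - 0 : Fin (2 * n))).val = n := by rw [hv]
    have hvval' : ((0 - v : Fin (2 * n))).val = n := by
      have : (0 - v : Fin (2 * n)) = -v := by ring
      rw [this, Fin.neg_def]
      simp only []
      show (2 * n - n) % (2 * n) = n
      rw [Nat.mod_eq_of_lt (by omega)]
      omega
    apply le_antisymm
    · have := dist_le_sub hm 0 v
      rw [hvval] at this; exact this
    · -- lower bound
      obtain ⟨p, hp⟩ := exists_walk_add hm 0 n
      have hcast : ((0 : Fin (2 * n)) + ((n : ℕ) : Fin (2 * n))) = v := by
        rw [zero_add]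
        apply Fin.ext
        rw [Fin.val_natCast]
        show n % (2 * n) = n
        exact Nat.mod_eq_of_lt (by omega)
      have hreach : (SimpleGraph.cycleGraph (2 * n)).Reachable 0 v := ⟨p.copy rfl hcast⟩
      obtain ⟨q, hq⟩ := hreach.exists_walk_length_eq_dist
      have := walk_lower hm q
      rw [hvval, hvval', hq, min_self] at this
      exact this
  · -- ratio equality
    have hn1 : (1 : ℝ) ≤ (n : ℝ) := by exact_mod_cast hn
    have hne : (n : ℝ) ≠ 0 := by positivity
    have hne2 : 2 * (n : ℝ) - 1 ≠ 0 := by nlinarith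
    field_simp
  · -- inequality
    have hn1 : (1 : ℝ) ≤ (n : ℝ) := by exact_mod_cast hn
    have hpos : 0 < 2 * (n : ℝ) - 1 := by linarith
    rw [ge_iff_le, sub_le_iff_le_add]
    have h2 : 2 * ((n : ℝ) ^ 2 / (2 * (n : ℝ) - 1)) = 2 * (n : ℝ) ^ 2 / (2 * (n : ℝ) - 1) := by
      ring
    rw [h2, div_le_iff₀ hpos]
    nlinarith
  · -- limit
    have h : Filter.Tendsto (fun n : ℕ => 2 - 1 / (n : ℝ)) Filter.atTop (nhds 2) := by
      have := tendsto_one_div_atTop_nhds_zero_nat (𝕜 := ℝ)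
      have h2 := Filter.Tendsto.sub (tendsto_const_nhds (x := (2 : ℝ))) this
      simpa using h2
    apply h.congr'
    filter_upwards [Filter.eventually_ge_atTop 1] with k hk
    have hne : (k : ℝ) ≠ 0 := by
      have : (1 : ℝ) ≤ (k : ℝ) := by exact_mod_cast hk
      linarith
    field_simp
end
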